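/- Let n ≥ 1, let a = (a₁,...,aₙ) ∈ ℝⁿ be a nonzero vector, and let b ∈ ℝ. Suppose X is a real symmetric positive semidefinite n×n matrix with X_{ii} = 1 for all i ∈ {1,...,n} and aᵀXa = b. Then there exists a real symmetric positive semidefinite 2n×2n matrix X̂ with X̂_{1:n,1:n} = X satisfying: X̂_{2n,2n} = b; a₁²X̂_{1,1} − 2a₁X̂_{1,n+1} + X̂_{n+1,n+1} = 0; and for every i with 2 ≤ i ≤ n, [a_i, 1, −1] X̂_{(i,n+i−1,n+i),(i,n+i−1,n+i)} [a_i; 1; −1] = 0. -/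

import Mathlib

/-!
Write `X` as the Gram matrix of vectors `v₁, …, vₙ` and append the partial sums
`wᵢ = a₁v₁ + ⋯ + aᵢvᵢ`. The Gram matrix of `(v₁, …, vₙ, w₁, …, wₙ)` is positive semidefinite and
contains `X`; its last diagonal entry is `‖wₙ‖² = aᵀXa = b`, and the two kinds of constraints are
`‖a₁v₁ - w₁‖²` and `‖aᵢvᵢ + wᵢ₋₁ - wᵢ‖²`, which vanish by construction.
-/

open Matrix

noncomputable section

/-- The quadratic form `[c, 1, −1] Y [c; 1; −1]` on the `3×3` principal submatrix of `X`
on rows/columns `r1, r2, r3`, written out entrywise. -/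
def triQuad {m : Type*} (c : ℝ) (X : Matrix m m ℝ) (r1 r2 r3 : m) : ℝ :=
  c * c * X r1 r1 + c * X r1 r2 - c * X r1 r3
    + c * X r2 r1 + X r2 r2 - X r2 r3
    - c * X r3 r1 - X r3 r2 + X r3 r3

namespace Matrix

open scoped MatrixOrder ComplexOrder in
theorem PosSemidef.exists_eq_gram {𝕜 n : Type*} [RCLike 𝕜] [Fintype n] {A : Matrix n n 𝕜}
    (hA : A.PosSemidef) : ∃ v : n → EuclideanSpace 𝕜 n, A = gram 𝕜 v := by
  classical
  obtain ⟨B, rfl⟩ := CStarAlgebra.nonneg_iff_eq_star_mul_self.mp hA.nonneg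
  refine ⟨fun i ↦ WithLp.toLp 2 fun k ↦ B k i, ?_⟩
  ext i j
  simp [mul_apply, PiLp.inner_apply, mul_comm]

end Matrix

section Gram

variable {E ι : Type*} [NormedAddCommGroup E] [InnerProductSpace ℝ E]

theorem sq_mul_gram_sub_two_mul_gram_add_gram (c : ℝ) (v : ι → E) (i j : ι) :
    c ^ 2 * gram ℝ v i i - 2 * c * gram ℝ v i j + gram ℝ v j j = ‖c • v i - v j‖ ^ 2 := by
  simp only [← real_inner_self_eq_norm_sq, gram_apply, inner_sub_left, inner_sub_right,
    real_inner_smul_left, real_inner_smul_right, real_inner_comm (v i) (v j)]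
  ring

theorem triQuad_gram (c : ℝ) (v : ι → E) (i j k : ι) :
    triQuad c (gram ℝ v) i j k = ‖c • v i + v j - v k‖ ^ 2 := by
  simp only [← real_inner_self_eq_norm_sq, triQuad, gram_apply, inner_sub_left, inner_sub_right,
    inner_add_left, inner_add_right, real_inner_smul_left, real_inner_smul_right]
  ring

theorem sum_sum_mul_gram_mul [Fintype ι] (a : ι → ℝ) (v : ι → E) :
    ∑ i, ∑ j, a i * gram ℝ v i j * a j = ‖∑ i, a i • v i‖ ^ 2 := by
  simp only [← real_inner_self_eq_norm_sq, sum_inner, inner_sum, real_inner_smul_left,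
    real_inner_smul_right, gram_apply]
  exact Finset.sum_congr rfl fun i _ ↦ Finset.sum_congr rfl fun j _ ↦ by
    rw [real_inner_comm (v i) (v j)]; ring

end Gram

section PartialSums

variable {R E : Type*} [Semiring R] [AddCommMonoid E] [Module R E] {n : ℕ}

def weightedPartialSum (a : Fin n → R) (v : Fin n → E) (m : ℕ) : E :=
  ∑ j ∈ Finset.univ.filter (fun j : Fin n ↦ (j : ℕ) < m), a j • v j

theorem weightedPartialSum_zero (a : Fin n → R) (v : Fin n → E) :
    weightedPartialSum a v 0 = 0 := by
  simp [weightedPartialSum]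

theorem weightedPartialSum_succ (a : Fin n → R) (v : Fin n → E) (j : Fin n) :
    weightedPartialSum a v (j + 1) = weightedPartialSum a v j + a j • v j := by
  have : Finset.univ.filter (fun k : Fin n ↦ (k : ℕ) < j + 1)
      = insert j (Finset.univ.filter fun k : Fin n ↦ (k : ℕ) < j) := by
    ext k; simp only [Finset.mem_filter, Finset.mem_insert, Finset.mem_univ, true_and, Fin.ext_iff]
    omega
  rw [weightedPartialSum, this, Finset.sum_insert (by simp), add_comm, weightedPartialSum]

theorem weightedPartialSum_self (a : Fin n → R) (v : Fin n → E) :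
    weightedPartialSum a v n = ∑ j, a j • v j := by
  simp [weightedPartialSum]

-- Entry `n + i` is `a₀v₀ + ⋯ + aᵢvᵢ`, i.e. the partial sum of the first `i + 1` terms.
def appendWeightedPartialSums (a : Fin n → R) (v : Fin n → E) (k : Fin (2 * n)) : E :=
  if h : (k : ℕ) < n then v ⟨k, h⟩ else weightedPartialSum a v (k - n + 1)

theorem appendWeightedPartialSums_of_lt (a : Fin n → R) (v : Fin n → E) (i : Fin n)
    (h : (i : ℕ) < 2 * n) : appendWeightedPartialSums a v ⟨i, h⟩ = v i := by
  simp [appendWeightedPartialSums]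

theorem appendWeightedPartialSums_of_le (a : Fin n → R) (v : Fin n → E) (k : Fin (2 * n))
    (h : n ≤ k) : appendWeightedPartialSums a v k = weightedPartialSum a v (k - n + 1) := by
  simp [appendWeightedPartialSums, h]

end PartialSums

/-- Every symmetric PSD `n×n` matrix `X` with unit diagonal and `aᵀXa = b` extends to a
symmetric PSD `2n×2n` matrix `X̂` satisfying the sparse extension constraints of the simple
example, with `X̂_{1:n,1:n} = X`. -/
theorem original_to_sparse_extension (n : ℕ) (hn : 1 ≤ n)
    (a : Fin n → ℝ) (b : ℝ)
    (X : Matrix (Fin n) (Fin n) ℝ) (hpsd : X.PosSemidef)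
    (hb : (∑ i : Fin n, ∑ j : Fin n, a i * X i j * a j) = b) :
    ∃ Xh : Matrix (Fin (2*n)) (Fin (2*n)) ℝ,
      Xh.PosSemidef ∧
      (∀ i j : Fin n, Xh ⟨(i : ℕ), by omega⟩ ⟨(j : ℕ), by omega⟩ = X i j) ∧
      Xh ⟨2*n - 1, by omega⟩ ⟨2*n - 1, by omega⟩ = b ∧
      (a ⟨0, by omega⟩ ^ 2 * Xh ⟨0, by omega⟩ ⟨0, by omega⟩
        - 2 * a ⟨0, by omega⟩ * Xh ⟨0, by omega⟩ ⟨n, by omega⟩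
        + Xh ⟨n, by omega⟩ ⟨n, by omega⟩ = 0) ∧
      (∀ i : Fin n, 1 ≤ (i : ℕ) →
        triQuad (a i) Xh ⟨(i : ℕ), by omega⟩ ⟨n + (i : ℕ) - 1, by omega⟩
          ⟨n + (i : ℕ), by omega⟩ = 0) := by
  obtain ⟨v, rfl⟩ := hpsd.exists_eq_gram
  refine ⟨gram ℝ (appendWeightedPartialSums a v), posSemidef_gram ℝ _, fun i j ↦ ?_, ?_, ?_,
    fun i hi ↦ ?_⟩
  · simp only [gram_apply, appendWeightedPartialSums_of_lt]
  · rw [gram_apply, appendWeightedPartialSums_of_le _ _ _ (by simp; omega),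
      show 2 * n - 1 - n + 1 = n by omega, weightedPartialSum_self, real_inner_self_eq_norm_sq,
      ← hb, sum_sum_mul_gram_mul]
  · rw [sq_mul_gram_sub_two_mul_gram_add_gram, appendWeightedPartialSums_of_le _ _ ⟨n, _⟩ le_rfl,
      appendWeightedPartialSums_of_lt a v ⟨0, hn⟩, Nat.sub_self, zero_add,
      weightedPartialSum_succ a v ⟨0, hn⟩, weightedPartialSum_zero, zero_add, sub_self, norm_zero,
      zero_pow two_ne_zero]
  · rw [triQuad_gram, appendWeightedPartialSums_of_lt,
      appendWeightedPartialSums_of_le _ _ _ (by simp; omega),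
      appendWeightedPartialSums_of_le _ _ _ (by simp),
      show n + (i : ℕ) - 1 - n + 1 = i by omega, show n + (i : ℕ) - n + 1 = i + 1 by omega,
      weightedPartialSum_succ, add_comm (a i • v i), sub_self, norm_zero, zero_pow two_ne_zero]
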